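/- arXiv:math/0505275 — 7 statements merged into one kernel-verified Lean document; each statement's English description precedes it below -/
import Mathlib

section
/- Let p be an odd prime and let u := ∑_{i=0}^{(p-1)/2} C((p-1)/2, i)² · λ^i ∈ 𝔽_p[λ] be the Hasse polynomial, where C(m,i) denotes the binomial coefficient. Then u satisfies the Gauss hypergeometric differential equation modulo p: in 𝔽_p[λ] one has 4·λ(λ-1)·u'' + 4·(2λ-1)·u' + u = 0, where u' and u'' denote the first and second formal derivatives of u with respect to λ. -/
/-!
With `m = (p - 1) / 2`, the Hasse polynomial is `₂F₁(-m, -m; 1; λ)`. Over any commutative ring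
it satisfies the hypergeometric equation `λ(λ - 1)u'' + ((1 - 2m)λ - 1)u' + m²u = 0`, because
its coefficients `c_n = C(m, n)²` obey `(n + 1)² c_{n+1} = (m - n)² c_n`. In characteristic
`p = 2m + 1` we have `2m = -1`, so four times this equation is the stated one.
-/

open Polynomial Finset

namespace Polynomial

variable {R : Type*} [CommRing R]

theorem coeff_X_mul_derivative (F : R[X]) (n : ℕ) :
    (X * derivative F).coeff n = n * F.coeff n := by
  cases n with
  | zero => simp
  | succ n => rw [coeff_X_mul, coeff_derivative]; push_cast; ring

theorem coeff_hypergeometric (F : R[X]) (a b : R) (n : ℕ) :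
    (X * (X - 1) * derivative (derivative F) + (C a * X - 1) * derivative F + C b * F).coeff n
      = ((n : R) ^ 2 + (a - 1) * n + b) * F.coeff n - ((n : R) + 1) ^ 2 * F.coeff (n + 1) := by
  have euler : X * (X - 1) * derivative (derivative F) + (C a * X - 1) * derivative F + C b * F
      = X * derivative (X * derivative F) + C (a - 1) * (X * derivative F) + C b * F
        - derivative (X * derivative F) := by
    simp only [derivative_mul, derivative_X, map_sub, map_one]
    ring
  rw [euler]
  simp only [coeff_add, coeff_sub, coeff_C_mul, coeff_X_mul_derivative, coeff_derivative]
  push_cast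
  ring

end Polynomial

theorem Nat.cast_choose_succ_mul {R : Type*} [CommRing R] (m n : ℕ) :
    (m.choose (n + 1) : R) * (n + 1) = m.choose n * (m - n) := by
  rcases le_or_gt n m with h | h
  · rw [← Nat.cast_sub h]
    exact_mod_cast congrArg (Nat.cast : ℕ → R) (Nat.choose_succ_right_eq m n)
  · simp [Nat.choose_eq_zero_of_lt h, Nat.choose_eq_zero_of_lt (Nat.lt_succ_of_lt h)]

noncomputable def hassePolynomial (R : Type*) [CommRing R] (m : ℕ) : R[X] :=
  ∑ i ∈ range (m + 1), C ((m.choose i : R) ^ 2) * X ^ i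

theorem coeff_hassePolynomial (R : Type*) [CommRing R] (m n : ℕ) :
    (hassePolynomial R m).coeff n = (m.choose n : R) ^ 2 := by
  simp only [hassePolynomial, finsetSum_coeff, coeff_C_mul_X_pow, sum_ite_eq, mem_range]
  split_ifs with h
  · rfl
  · simp [Nat.choose_eq_zero_of_lt (by omega : m < n)]

theorem hassePolynomial_hypergeometric (R : Type*) [CommRing R] (m : ℕ) :
    X * (X - 1) * derivative (derivative (hassePolynomial R m))
      + (C (1 - 2 * m : R) * X - 1) * derivative (hassePolynomial R m)
      + C ((m : R) ^ 2) * hassePolynomial R m = 0 := by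
  ext n
  rw [coeff_hypergeometric, coeff_hassePolynomial, coeff_hassePolynomial, coeff_zero]
  linear_combination (-((m.choose (n + 1) : R) * (n + 1) + m.choose n * (m - n)))
    * Nat.cast_choose_succ_mul (R := R) m n

theorem stmt3_general (p : ℕ) (hodd : Odd p)
    (u : Polynomial (ZMod p))
    (hu : u = ∑ i ∈ Finset.range ((p - 1) / 2 + 1),
      Polynomial.C ((Nat.choose ((p - 1) / 2) i : ZMod p) ^ 2) * X ^ i) :
    4 * (X * (X - 1)) * derivative (derivative u)
      + 4 * (2 * X - 1) * derivative u + u = 0 := by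
  obtain ⟨m, rfl⟩ := hodd
  rw [show (2 * m + 1 - 1) / 2 = m by omega] at hu
  change u = hassePolynomial _ m at hu
  subst hu
  have hchar : (2 * m + 1 : (ZMod (2 * m + 1))[X]) = 0 := by
    exact_mod_cast CharP.cast_eq_zero (ZMod (2 * m + 1))[X] (2 * m + 1)
  have hyp := hassePolynomial_hypergeometric (ZMod (2 * m + 1)) m
  simp only [map_sub, map_one, map_mul, map_ofNat, map_pow, map_natCast] at hyp
  linear_combination 4 * hyp
    + (4 * X * derivative (hassePolynomial _ m) + (1 - 2 * m) * hassePolynomial _ m) * hchar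

/-- Let `p` be an odd prime and let
`u = ∑_{i=0}^{(p-1)/2} C((p-1)/2, i)² λ^i ∈ 𝔽_p[λ]` be the Hasse polynomial.  Then `u`
satisfies the Gauss hypergeometric differential equation modulo `p`:
`4 λ(λ-1) u'' + 4 (2λ-1) u' + u = 0` in `𝔽_p[λ]`. -/
theorem stmt3 (p : ℕ) (hp : p.Prime) (hodd : Odd p)
    (u : Polynomial (ZMod p))
    (hu : u = ∑ i ∈ Finset.range ((p - 1) / 2 + 1),
      Polynomial.C ((Nat.choose ((p - 1) / 2) i : ZMod p) ^ 2) * X ^ i) :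
    4 * (X * (X - 1)) * derivative (derivative u)
      + 4 * (2 * X - 1) * derivative u + u = 0 :=
  stmt3_general p hodd u hu
end

section
/- Let p be an odd prime and let a₁, a₂, a₃ be nonnegative integers with a₁ + a₂ + a₃ even and a₁ + a₂ + a₃ ≤ p - 1. Set d := (p - 1 - a₁ - a₂ - a₃)/2, and define in 𝔽_p the elements A := (1 + a₁ + a₂ + a₃)/2, B := (1 + a₁ + a₂ - a₃)/2 and C := 1 + a₁ (division by 2 taken in 𝔽_p). Then the hypergeometric differential equation t(t-1)·u'' + ((A + B + 1)t - C)·u' + A·B·u = 0 has a nonzero polynomial solution u ∈ 𝔽_p[t] of degree d. -/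
/-!
The coefficient of `tⁿ` in `t(t-1)u'' + ((A+B+1)t - C)u' + ABu` is
`(n+A)(n+B)uₙ - (n+1)(n+C)uₙ₊₁`. In `𝔽_p` we have `2(d + A) = p = 0`, so the hypergeometric
series `uₙ = (A)ₙ(B)ₙ / (n! (C)ₙ)` stops in degree `d` and solves the equation, provided its
recursion makes sense up to degree `d`. For `k < d` the elements `k + 1`, `k + C`, `2(k + A)`
and `2(k + B)` are images of integers of absolute value less than `p` which are nonzero (the
last two are odd), so the recursion is well defined and the coefficient of `t^d` is nonzero.
-/

open Polynomial Finset

namespace Polynomial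

section CommRing

variable {R : Type*} [CommRing R]

noncomputable def hypergeometricOperator (a b c : R) (u : R[X]) : R[X] :=
  X * (X - 1) * derivative (derivative u) + (C (a + b + 1) * X - C c) * derivative u
    + C (a * b) * u

theorem coeff_hypergeometricOperator (a b c : R) (u : R[X]) (n : ℕ) :
    (hypergeometricOperator a b c u).coeff n
      = (n + a) * (n + b) * u.coeff n - (n + 1) * (n + c) * u.coeff (n + 1) := by
  have hsplit : hypergeometricOperator a b c u = X * (X * derivative (derivative u))
      - X * derivative (derivative u) + C (a + b + 1) * (X * derivative u)
      - C c * derivative u + C (a * b) * u := by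
    unfold hypergeometricOperator; ring
  rw [hsplit]
  rcases n with _ | _ | n <;>
  · simp only [coeff_add, coeff_sub, coeff_C_mul, coeff_X_mul, coeff_X_mul_zero, coeff_derivative]
    push_cast
    ring

end CommRing

section Field

variable {F : Type*} [Field F] (a b c : F)

/-- The coefficient `(a)ₙ (b)ₙ / (n! (c)ₙ)` of the hypergeometric series `₂F₁(a, b; c; t)`. -/
noncomputable def hypergeometricCoeff (n : ℕ) : F :=
  ∏ k ∈ range n, (k + a) * (k + b) / ((k + 1) * (k + c))

theorem hypergeometricCoeff_succ (n : ℕ) :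
    hypergeometricCoeff a b c (n + 1)
      = hypergeometricCoeff a b c n * ((n + a) * (n + b) / ((n + 1) * (n + c))) :=
  prod_range_succ _ n

variable {a b c} {d : ℕ}

theorem hypergeometricCoeff_eq_zero_of_lt (hda : (d : F) + a = 0) {n : ℕ} (hn : d < n) :
    hypergeometricCoeff a b c n = 0 :=
  prod_eq_zero (mem_range.2 hn) (by rw [hda, zero_mul, zero_div])

theorem hypergeometricCoeff_ne_zero (hden : ∀ k < d, ((k : F) + 1) * (k + c) ≠ 0)
    (hnum : ∀ k < d, ((k : F) + a) * (k + b) ≠ 0) : hypergeometricCoeff a b c d ≠ 0 :=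
  prod_ne_zero_iff.2 fun k hk => div_ne_zero (hnum k (mem_range.1 hk)) (hden k (mem_range.1 hk))

theorem hypergeometricCoeff_recurrence (hda : (d : F) + a = 0)
    (hden : ∀ k < d, ((k : F) + 1) * (k + c) ≠ 0) (n : ℕ) :
    (n + a) * (n + b) * hypergeometricCoeff a b c n
      = (n + 1) * (n + c) * hypergeometricCoeff a b c (n + 1) := by
  rcases lt_trichotomy n d with hn | rfl | hn
  · rw [hypergeometricCoeff_succ, mul_left_comm, mul_div_cancel₀ _ (hden n hn), mul_comm]
  · rw [hda, hypergeometricCoeff_eq_zero_of_lt hda (Nat.lt_succ_self n)]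
    ring
  · rw [hypergeometricCoeff_eq_zero_of_lt hda hn, hypergeometricCoeff_eq_zero_of_lt hda (by omega)]
    ring

variable (a b c d) in
noncomputable def hypergeometricPolynomial : F[X] :=
  ∑ n ∈ range (d + 1), monomial n (hypergeometricCoeff a b c n)

theorem coeff_hypergeometricPolynomial (hda : (d : F) + a = 0) (n : ℕ) :
    (hypergeometricPolynomial a b c d).coeff n = hypergeometricCoeff a b c n := by
  rw [hypergeometricPolynomial, finsetSum_coeff]
  simp only [coeff_monomial, sum_ite_eq', mem_range, Nat.lt_succ_iff]
  split_ifs with hn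
  · rfl
  · exact (hypergeometricCoeff_eq_zero_of_lt hda (not_le.1 hn)).symm

theorem hypergeometricOperator_hypergeometricPolynomial (hda : (d : F) + a = 0)
    (hden : ∀ k < d, ((k : F) + 1) * (k + c) ≠ 0) :
    hypergeometricOperator a b c (hypergeometricPolynomial a b c d) = 0 := by
  ext n
  rw [coeff_hypergeometricOperator, coeff_hypergeometricPolynomial hda,
    coeff_hypergeometricPolynomial hda, hypergeometricCoeff_recurrence hda hden, sub_self,
    coeff_zero]

theorem natDegree_hypergeometricPolynomial (hda : (d : F) + a = 0)
    (hden : ∀ k < d, ((k : F) + 1) * (k + c) ≠ 0) (hnum : ∀ k < d, ((k : F) + a) * (k + b) ≠ 0) :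
    (hypergeometricPolynomial a b c d).natDegree = d :=
  natDegree_eq_of_le_of_coeff_ne_zero
    (natDegree_le_iff_coeff_eq_zero.2 fun _ hn => by
      rw [coeff_hypergeometricPolynomial hda, hypergeometricCoeff_eq_zero_of_lt hda hn])
    (by rw [coeff_hypergeometricPolynomial hda]; exact hypergeometricCoeff_ne_zero hden hnum)

theorem hypergeometricPolynomial_ne_zero (hda : (d : F) + a = 0)
    (hden : ∀ k < d, ((k : F) + 1) * (k + c) ≠ 0) (hnum : ∀ k < d, ((k : F) + a) * (k + b) ≠ 0) :
    hypergeometricPolynomial a b c d ≠ 0 := fun h =>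
  hypergeometricCoeff_ne_zero hden hnum <| by
    rw [← coeff_hypergeometricPolynomial hda, h, coeff_zero]

end Field

end Polynomial

theorem ZMod.intCast_ne_zero_of_abs_lt {p : ℕ} {z : ℤ} (hz : z ≠ 0) (hzp : |z| < p) :
    (z : ZMod p) ≠ 0 := fun h =>
  hz (Int.eq_zero_of_abs_lt_dvd ((ZMod.intCast_zmod_eq_zero_iff_dvd z p).1 h) hzp)

theorem ZMod.ne_zero_of_two_mul_eq_intCast {p : ℕ} {x : ZMod p} {z : ℤ} (hx : 2 * x = z)
    (hz : z ≠ 0) (hzp : |z| < p) : x ≠ 0 := by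
  rintro rfl
  exact ZMod.intCast_ne_zero_of_abs_lt hz hzp (by rw [← hx, mul_zero])

section Signature

variable {p d a₁ a₂ a₃ k : ℕ} [Fact p.Prime]

theorem signature_denominator_ne_zero (hp : 2 * d + (a₁ + a₂ + a₃) + 1 = p) (hk : k < d) :
    ((k : ZMod p) + 1) * (k + (1 + a₁)) ≠ 0 := by
  refine mul_ne_zero ?_ ?_
  · exact_mod_cast ZMod.intCast_ne_zero_of_abs_lt (z := k + 1) (by omega)
      (abs_lt.2 ⟨by omega, by omega⟩)
  · rw [← add_assoc]
    exact_mod_cast ZMod.intCast_ne_zero_of_abs_lt (z := k + 1 + a₁) (by omega)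
      (abs_lt.2 ⟨by omega, by omega⟩)

theorem signature_numerator_ne_zero (hp : 2 * d + (a₁ + a₂ + a₃) + 1 = p) (hk : k < d)
    (heven : Even (a₁ + a₂ + a₃)) {A B : ZMod p}
    (h2A : 2 * A = 1 + (a₁ : ZMod p) + a₂ + a₃) (h2B : 2 * B = 1 + (a₁ : ZMod p) + a₂ - a₃) :
    ((k : ZMod p) + A) * (k + B) ≠ 0 := by
  obtain ⟨r, hr⟩ := heven
  refine mul_ne_zero ?_ ?_
  · refine ZMod.ne_zero_of_two_mul_eq_intCast (z := 2 * k + 1 + a₁ + a₂ + a₃) ?_ (by omega)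
      (abs_lt.2 ⟨by omega, by omega⟩)
    push_cast
    linear_combination h2A
  · refine ZMod.ne_zero_of_two_mul_eq_intCast (z := 2 * k + 1 + a₁ + a₂ - a₃) ?_ (by omega)
      (abs_lt.2 ⟨by omega, by omega⟩)
    push_cast
    linear_combination h2B

end Signature

/-- Let `p` be an odd prime and `a₁, a₂, a₃` nonnegative integers with
`a₁ + a₂ + a₃` even and `a₁ + a₂ + a₃ ≤ p - 1`.  Set `d := (p - 1 - a₁ - a₂ - a₃)/2` and,
in `𝔽_p`, `A := (1 + a₁ + a₂ + a₃)/2`, `B := (1 + a₁ + a₂ - a₃)/2`, `C := 1 + a₁`.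
Then the hypergeometric equation `t(t-1) u'' + ((A+B+1) t - C) u' + A B u = 0` has a
nonzero polynomial solution `u ∈ 𝔽_p[t]` of degree `d`. -/
theorem stmt4 (p : ℕ) (hp : p.Prime) (hodd : Odd p)
    (a₁ a₂ a₃ : ℕ) (heven : Even (a₁ + a₂ + a₃)) (hle : a₁ + a₂ + a₃ ≤ p - 1)
    (d : ℕ) (hd : d = (p - 1 - (a₁ + a₂ + a₃)) / 2)
    (A B C' : ZMod p)
    (hA : A = (1 + (a₁ : ZMod p) + a₂ + a₃) * (2 : ZMod p)⁻¹)
    (hB : B = (1 + (a₁ : ZMod p) + a₂ - a₃) * (2 : ZMod p)⁻¹)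
    (hC : C' = 1 + (a₁ : ZMod p)) :
    ∃ u : Polynomial (ZMod p), u ≠ 0 ∧ u.natDegree = d ∧
      X * (X - 1) * derivative (derivative u)
        + (Polynomial.C (A + B + 1) * X - Polynomial.C C') * derivative u
        + Polynomial.C (A * B) * u = 0 := by
  have : Fact p.Prime := ⟨hp⟩
  obtain ⟨q, hq⟩ := hodd
  have hp_eq : 2 * d + (a₁ + a₂ + a₃) + 1 = p := by obtain ⟨r, hr⟩ := heven; omega
  have hp3 : 3 ≤ p := by have := hp.two_le; omega
  have h2 : (2 : ZMod p) ≠ 0 := by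
    exact_mod_cast ZMod.intCast_ne_zero_of_abs_lt (z := 2) two_ne_zero
      (abs_lt.2 ⟨by omega, by omega⟩)
  have h2A : 2 * A = 1 + (a₁ : ZMod p) + a₂ + a₃ := by
    rw [hA, mul_comm, inv_mul_cancel_right₀ h2]
  have h2B : 2 * B = 1 + (a₁ : ZMod p) + a₂ - a₃ := by
    rw [hB, mul_comm, inv_mul_cancel_right₀ h2]
  have hda : (d : ZMod p) + A = 0 := by
    refine (mul_eq_zero.1 ?_).resolve_left h2
    calc 2 * ((d : ZMod p) + A) = ((2 * d + (a₁ + a₂ + a₃) + 1 : ℕ) : ZMod p) := by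
          push_cast
          linear_combination h2A
      _ = 0 := by rw [hp_eq, ZMod.natCast_self]
  have hden : ∀ k < d, ((k : ZMod p) + 1) * (k + C') ≠ 0 := fun k hk =>
    hC ▸ signature_denominator_ne_zero hp_eq hk
  have hnum : ∀ k < d, ((k : ZMod p) + A) * (k + B) ≠ 0 := fun k hk =>
    signature_numerator_ne_zero hp_eq hk heven h2A h2B
  exact ⟨_, hypergeometricPolynomial_ne_zero hda hden hnum,
    natDegree_hypergeometricPolynomial hda hden hnum,
    hypergeometricOperator_hypergeometricPolynomial hda hden⟩
end

section
/- Let p be an odd prime, k an algebraically closed field of characteristic p, λ ∈ k with λ ≠ 0 and λ ≠ 1, and β ∈ k. Let L be the operator L(u) = t(t-1)(t-λ)·u'' + (3t² - 2(1+λ)t + λ)·u' + (t - β)·u on k[t]. If u ∈ k[t] is a nonzero polynomial with L(u) = 0, then for each c ∈ {0, 1, λ} the multiplicity of c as a root of u is divisible by p. Consequently, if moreover deg(u) = p - 1, then u(0) ≠ 0, u(1) ≠ 0 and u(λ) ≠ 0. -/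
open Polynomial

/-- The operator `L(u) = t(t-1)(t-λ) u'' + (3t² - 2(1+λ)t + λ) u' + (t - β) u`
on the polynomial ring `k[t]`. -/
noncomputable def Lop {k : Type*} [Field k] (l b : k) (u : Polynomial k) : Polynomial k :=
  X * (X - 1) * (X - C l) * derivative (derivative u)
    + (3 * X ^ 2 - Polynomial.C (2 * (1 + l)) * X + C l) * derivative u
    + (X - C b) * u

/-!
Near a simple zero `c` of `A = t(t-1)(t-λ)`, write `L(u) = (A u')' + (t - β) u`. If `u` vanishes to
order `m ≥ 1` at `c`, the lowest-order term of `L(u)` at `c` is `m² A'(c) u₀ (t - c)^(m-1)`, so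
`L(u) = 0` forces `m² = 0` in `k`, i.e. `p ∣ m`. A polynomial of degree `p - 1` therefore cannot
vanish at `c` at all.
-/

section Indicial

variable {R : Type*} [CommRing R]

theorem indicial_eq_zero_of_derivative_mul_add_mul_eq_zero (c : R) (m : ℕ) {q B v : R[X]}
    (h : derivative ((X - C c) * q * derivative ((X - C c) ^ (m + 1) * v))
      + B * ((X - C c) ^ (m + 1) * v) = 0) :
    ((m + 1 : ℕ) : R) ^ 2 * q.eval c * v.eval c = 0 := by
  set s : R[X] := X - C c
  have hs : derivative s = 1 := by simp [s]
  set G : R[X] := C ((m + 1 : ℕ) : R) * (q * v) + s * (q * derivative v)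
  have hflux : s * q * derivative (s ^ (m + 1) * v) = s ^ (m + 1) * G := by
    simp only [G, derivative_mul, derivative_pow, hs, mul_one, Nat.add_sub_cancel]
    push_cast
    ring
  have hfactor : derivative (s * q * derivative (s ^ (m + 1) * v)) + B * (s ^ (m + 1) * v)
      = s ^ m * (C ((m + 1 : ℕ) : R) * G + s * derivative G + s * (B * v)) := by
    rw [hflux, derivative_mul, derivative_pow, hs]
    simp only [mul_one, Nat.add_sub_cancel]
    ring
  rw [hfactor, ((monic_X_sub_C c).pow m).mul_right_eq_zero_iff] at h
  have hc := congrArg (eval c) h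
  simp only [G, s, eval_add, eval_mul, eval_C, eval_sub, eval_X, sub_self, zero_mul, add_zero,
    eval_zero] at hc
  linear_combination hc

theorem cast_rootMultiplicity_eq_zero_of_derivative_mul_add_mul_eq_zero [IsDomain R] {c : R}
    {q B u : R[X]} (hq : q.eval c ≠ 0) (hu : u ≠ 0)
    (h : derivative ((X - C c) * q * derivative u) + B * u = 0) :
    (u.rootMultiplicity c : R) = 0 := by
  by_cases h0 : u.rootMultiplicity c = 0
  · simp [h0]
  obtain ⟨m, hm⟩ := Nat.exists_eq_add_one_of_ne_zero h0
  set v := u /ₘ (X - C c) ^ u.rootMultiplicity c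
  have hv : v.eval c ≠ 0 := eval_divByMonic_pow_rootMultiplicity_ne_zero c hu
  have hu_eq : (X - C c) ^ (m + 1) * v = u := hm ▸ pow_mul_divByMonic_rootMultiplicity_eq u c
  rw [← hu_eq] at h
  have := indicial_eq_zero_of_derivative_mul_add_mul_eq_zero c m h
  rw [hm]
  simpa [hq, hv] using this

end Indicial

theorem Nat.eq_zero_of_dvd_of_le_sub_one {m p : ℕ} (hdvd : p ∣ m) (hle : m ≤ p - 1) : m = 0 := by
  rcases Nat.eq_zero_or_pos p with rfl | hp
  · omega
  · exact Nat.eq_zero_of_dvd_of_lt hdvd (by omega)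

section Lop

variable {k : Type*} [Field k]

theorem Lop_eq_derivative_add (l b : k) (u : k[X]) :
    Lop l b u = derivative (X * (X - 1) * (X - C l) * derivative u) + (X - C b) * u := by
  simp only [Lop, derivative_mul, derivative_X, derivative_sub, derivative_one, derivative_C,
    C_mul, C_add, map_ofNat, C_1]
  ring

theorem exists_eq_X_sub_C_mul_eval_ne_zero {l : k} (hl0 : l ≠ 0) (hl1 : l ≠ 1) :
    ∀ c ∈ ({0, 1, l} : Set k),
      ∃ q : k[X], X * (X - 1) * (X - C l) = (X - C c) * q ∧ q.eval c ≠ 0 := by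
  rintro c (rfl | rfl | rfl)
  · refine ⟨(X - 1) * (X - C l), by simp; ring, ?_⟩
    simpa using hl0
  · refine ⟨X * (X - C l), by simp; ring, ?_⟩
    simpa [sub_eq_zero] using hl1.symm
  · refine ⟨X * (X - 1), by ring, ?_⟩
    simpa [sub_eq_zero] using ⟨hl0, hl1⟩

theorem dvd_rootMultiplicity_of_Lop_eq_zero (p : ℕ) [CharP k p] {l b : k} (hl0 : l ≠ 0)
    (hl1 : l ≠ 1) {u : k[X]} (hu : u ≠ 0) (hLu : Lop l b u = 0) :
    ∀ c ∈ ({0, 1, l} : Set k), p ∣ u.rootMultiplicity c := by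
  intro c hc
  obtain ⟨q, hA, hq⟩ := exists_eq_X_sub_C_mul_eval_ne_zero hl0 hl1 c hc
  rw [Lop_eq_derivative_add, hA] at hLu
  exact (CharP.cast_eq_zero_iff k p _).mp
    (cast_rootMultiplicity_eq_zero_of_derivative_mul_add_mul_eq_zero hq hu hLu)

end Lop

theorem stmt8_general {k : Type*} [Field k] (p : ℕ)
    [CharP k p] (l b : k) (hl0 : l ≠ 0) (hl1 : l ≠ 1)
    (u : Polynomial k) (hu : u ≠ 0) (hLu : Lop l b u = 0) :
    (∀ c ∈ ({0, 1, l} : Set k), p ∣ u.rootMultiplicity c) ∧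
      (u.natDegree = p - 1 → u.eval 0 ≠ 0 ∧ u.eval 1 ≠ 0 ∧ u.eval l ≠ 0) := by
  classical
  have hdvd := dvd_rootMultiplicity_of_Lop_eq_zero p hl0 hl1 hu hLu
  refine ⟨hdvd, fun hdeg => ?_⟩
  have hne : ∀ c ∈ ({0, 1, l} : Set k), u.eval c ≠ 0 := by
    intro c hc hroot
    have hle : u.rootMultiplicity c ≤ p - 1 := hdeg ▸ (count_roots u).symm.trans_le
      ((Multiset.count_le_card c u.roots).trans (card_roots' u))
    have hzero := Nat.eq_zero_of_dvd_of_le_sub_one (hdvd c hc) hle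
    exact (rootMultiplicity_pos hu).mpr hroot |>.ne' hzero
  exact ⟨hne 0 (by simp), hne 1 (by simp), hne l (by simp)⟩

/-- Let `p` be an odd prime, `k` algebraically closed of characteristic
`p`, `λ ∈ k \ {0,1}`, `β ∈ k`.  If `u ∈ k[t]` is a nonzero polynomial with `L(u) = 0`,
then for each `c ∈ {0, 1, λ}` the multiplicity of `c` as a root of `u` is divisible by
`p`; consequently, if moreover `deg u = p - 1`, then `u(0) ≠ 0`, `u(1) ≠ 0`, `u(λ) ≠ 0`. -/
theorem stmt8 {k : Type*} [Field k] [IsAlgClosed k] (p : ℕ) (hp : p.Prime) (hodd : Odd p)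
    [CharP k p] (l b : k) (hl0 : l ≠ 0) (hl1 : l ≠ 1)
    (u : Polynomial k) (hu : u ≠ 0) (hLu : Lop l b u = 0) :
    (∀ c ∈ ({0, 1, l} : Set k), p ∣ u.rootMultiplicity c) ∧
      (u.natDegree = p - 1 → u.eval 0 ≠ 0 ∧ u.eval 1 ≠ 0 ∧ u.eval l ≠ 0) :=
  stmt8_general p l b hl0 hl1 u hu hLu
end

section
/- Let p be an odd prime, k an algebraically closed field of characteristic p, λ ∈ k with λ ≠ 0 and λ ≠ 1, and β ∈ k. Let L be the operator L(u) = t(t-1)(t-λ)·u'' + (3t² - 2(1+λ)t + λ)·u' + (t - β)·u on k[t]. If u₁, u₂ ∈ k[t] are polynomials with L(u₁) = L(u₂) = 0, then their Wronskian vanishes: u₁·u₂' - u₁'·u₂ = 0; equivalently, u₁ and u₂ are linearly dependent over the subfield k(t^p) of k(t). -/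
open Polynomial

/-!
Write `a = t(t-1)(t-λ)`. The coefficient of `u'` in `L` is `a'`, so the Wronskian `W` of two
solutions satisfies `(aW)' = 0`. At `t = 0` the indicial equation is `λm² = 0`, so a solution
`u₁ = t^m v` with `v(0) ≠ 0` has `m = 0` in `k`; then `t^m` behaves as a constant for `d/dt`,
`v` is again a solution and `W(u₁, u₂) = t^m W(v, u₂)`.

In `k⟦t⟧` we have `W(v, u₂) = v² q'` with `q = u₂/v`, so `(t g q')' = 0` for the unit
`g = (t-1)(t-λ)v²`. By induction `t^N ∣ q'` for every `N`: if `N + 1 = 0` in `k`, the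
coefficient `(N+1) q_{N+1}` of `t^N` in `q'` vanishes; otherwise `(t g q')' = 0` kills the
coefficient of `t^{N+1}` in `t g q'`, and `g` is a unit. Hence `q' = 0` and `W = 0`.
-/

namespace PowerSeries

theorem X_pow_succ_dvd_of_coeff_eq_zero {R : Type*} [Semiring R] {φ : R⟦X⟧} {N : ℕ}
    (h : X ^ N ∣ φ) (hN : coeff N φ = 0) : X ^ (N + 1) ∣ φ := by
  rw [X_pow_dvd_iff] at h ⊢
  intro d hd
  rcases Nat.lt_succ_iff_lt_or_eq.mp hd with hd | rfl
  exacts [h d hd, hN]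

theorem derivative_eq_zero_of_derivative_X_mul_mul_derivative_eq_zero {R : Type*} [CommRing R]
    [IsDomain R] {g φ : R⟦X⟧} (hg : constantCoeff g ≠ 0)
    (h : d⁄dX R (X * g * d⁄dX R φ) = 0) : d⁄dX R φ = 0 := by
  suffices hdvd : ∀ N, X ^ N ∣ d⁄dX R φ by
    ext n
    simpa using X_pow_dvd_iff.mp (hdvd (n + 1)) n n.lt_succ_self
  intro N
  induction N with
  | zero => simp
  | succ N ih =>
    by_cases hN : (N + 1 : R) = 0
    · refine X_pow_succ_dvd_of_coeff_eq_zero ih ?_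
      rw [coeff_derivative, hN, mul_zero]
    · have hcoeff : coeff (N + 1) (X * g * d⁄dX R φ) = 0 := by
        have := congrArg (coeff N) h
        rwa [coeff_derivative, map_zero, mul_eq_zero, or_iff_left hN] at this
      have hdvd : X ^ (N + 1 + 1) ∣ X * (g * d⁄dX R φ) := by
        rw [← mul_assoc]
        refine X_pow_succ_dvd_of_coeff_eq_zero ?_ hcoeff
        rw [pow_succ', mul_assoc]
        exact mul_dvd_mul_left X (dvd_mul_of_dvd_right ih g)
      rw [pow_succ' X (N + 1), mul_dvd_mul_iff_left X_ne_zero] at hdvd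
      exact X_prime.pow_dvd_of_dvd_mul_left _ (mt X_dvd_iff.mp hg) hdvd

theorem sq_mul_derivative_mul_inv {k : Type*} [Field k] {v : k⟦X⟧} (hv : constantCoeff v ≠ 0)
    (w : k⟦X⟧) : v ^ 2 * d⁄dX k (w * v⁻¹) = v * d⁄dX k w - d⁄dX k v * w := by
  have hinv : v * v⁻¹ = 1 := PowerSeries.mul_inv_cancel v hv
  rw [Derivation.leibniz, derivative_inv', smul_eq_mul, smul_eq_mul]
  linear_combination (v * d⁄dX k w - w * d⁄dX k v * (v * v⁻¹ + 1)) * hinv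

end PowerSeries

namespace Polynomial

section CommRing

variable {R : Type*} [CommRing R]

theorem coe_wronskian (v w : R[X]) :
    (wronskian v w : PowerSeries R) =
      v * PowerSeries.derivative R w - PowerSeries.derivative R v * w := by
  simp only [wronskian, coe_sub, coe_mul, PowerSeries.derivative_coe]

theorem derivative_X_pow_mul {m : ℕ} (hm : (m : R) = 0) (v : R[X]) :
    derivative (X ^ m * v) = X ^ m * derivative v := by
  simp [derivative_mul, derivative_X_pow, hm]

theorem wronskian_X_pow_mul_left {m : ℕ} (hm : (m : R) = 0) (v w : R[X]) :
    wronskian (X ^ m * v) w = X ^ m * wronskian v w := by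
  rw [wronskian, wronskian, derivative_X_pow_mul hm]
  ring

end CommRing

theorem wronskian_eq_zero_of_derivative_X_mul_mul_wronskian_eq_zero {k : Type*} [Field k]
    {c v w : k[X]} (hc : c.coeff 0 ≠ 0) (hv : v.coeff 0 ≠ 0)
    (h : derivative (X * c * wronskian v w) = 0) : wronskian v w = 0 := by
  have hV : PowerSeries.constantCoeff (v : PowerSeries k) ≠ 0 := by rwa [constantCoeff_coe]
  have hcV : PowerSeries.constantCoeff (c * v ^ 2 : PowerSeries k) ≠ 0 := by
    simpa [constantCoeff_coe] using mul_ne_zero hc (pow_ne_zero 2 hv)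
  rw [← coe_eq_zero_iff, coe_wronskian, ← PowerSeries.sq_mul_derivative_mul_inv hV,
    PowerSeries.derivative_eq_zero_of_derivative_X_mul_mul_derivative_eq_zero hcV, mul_zero]
  rw [← coe_eq_zero_iff, ← PowerSeries.derivative_coe, coe_mul, coe_mul, coe_X, coe_wronskian,
    ← PowerSeries.sq_mul_derivative_mul_inv hV] at h
  simpa only [mul_assoc] using h

end Polynomial

section Lop

variable {k : Type*} [Field k]

theorem derivative_mul_wronskian_eq (l b : k) (v w : k[X]) :
    derivative (X * ((X - 1) * (X - C l)) * wronskian v w) = v * Lop l b w - w * Lop l b v := by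
  simp only [Lop, wronskian, derivative_mul, derivative_sub, derivative_X, derivative_one,
    derivative_C, map_add, map_mul, map_one, map_ofNat]
  ring

theorem Lop_X_pow_mul (l b : k) {m : ℕ} (hm : (m : k) = 0) (v : k[X]) :
    Lop l b (X ^ m * v) = X ^ m * Lop l b v := by
  simp only [Lop, derivative_X_pow_mul hm]
  ring

theorem Lop_X_pow_succ_mul (l b : k) (n : ℕ) (v : k[X]) :
    Lop l b (X ^ (n + 1) * v) = X ^ n * (X * Lop l b v + C (n + 1 : k) *
      (2 * X * ((X - 1) * (X - C l)) * derivative v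
        + (3 * X ^ 2 - C (2 * (1 + l)) * X + C l) * v + C (n : k) * ((X - 1) * (X - C l)) * v)) := by
  have hX : X * derivative (X ^ n : k[X]) = C (n : k) * X ^ n := by
    rcases n with _ | n
    · simp
    · rw [derivative_X_pow_succ, ← mul_assoc, mul_comm X, mul_assoc, ← pow_succ']
      push_cast
      rfl
  simp only [Lop, derivative_mul, derivative_add, derivative_X_pow_succ, derivative_C, zero_mul,
    zero_add]
  linear_combination (C (n + 1 : k) * ((X - 1) * (X - C l)) * v) * hX

theorem natCast_eq_zero_of_Lop_X_pow_mul_eq_zero {l b : k} (hl : l ≠ 0) {m : ℕ} {v : k[X]}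
    (hv : v.coeff 0 ≠ 0) (h : Lop l b (X ^ m * v) = 0) : (m : k) = 0 := by
  rcases m with _ | n
  · exact Nat.cast_zero
  rw [Lop_X_pow_succ_mul, mul_eq_zero, or_iff_right (pow_ne_zero _ X_ne_zero)] at h
  rw [coeff_zero_eq_eval_zero] at hv
  have h0 : ((n : k) + 1) ^ 2 * (l * eval 0 v) = 0 := by
    have := congrArg (eval 0) h
    simp only [eval_add, eval_mul, eval_sub, eval_pow, eval_X, eval_C, eval_one, eval_ofNat,
      eval_zero] at this
    linear_combination this
  push_cast
  exact (pow_eq_zero_iff two_ne_zero).mp ((mul_eq_zero.mp h0).resolve_right (mul_ne_zero hl hv))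

theorem wronskian_eq_zero_of_Lop_eq_zero {l b : k} (hl : l ≠ 0) {v w : k[X]}
    (hv : v.coeff 0 ≠ 0) (hLv : Lop l b v = 0) (hLw : Lop l b w = 0) : wronskian v w = 0 := by
  refine wronskian_eq_zero_of_derivative_X_mul_mul_wronskian_eq_zero (c := (X - 1) * (X - C l))
    (by simpa using hl) hv ?_
  rw [derivative_mul_wronskian_eq, hLv, hLw, mul_zero, mul_zero, sub_zero]

end Lop

theorem stmt9_general {k : Type*} [Field k] (l b : k) (hl0 : l ≠ 0)
    (u₁ u₂ : Polynomial k) (h₁ : Lop l b u₁ = 0) (h₂ : Lop l b u₂ = 0) :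
    u₁ * derivative u₂ - derivative u₁ * u₂ = 0 := by
  change wronskian u₁ u₂ = 0
  rcases eq_or_ne u₁ 0 with rfl | hu₁
  · exact wronskian_zero_left u₂
  obtain ⟨v, hu₁v, hv⟩ := u₁.exists_eq_pow_rootMultiplicity_mul_and_not_dvd hu₁ 0
  rw [map_zero, sub_zero] at hu₁v hv
  rw [X_dvd_iff] at hv
  have hm := natCast_eq_zero_of_Lop_X_pow_mul_eq_zero hl0 hv (hu₁v ▸ h₁)
  rw [hu₁v, Lop_X_pow_mul l b hm, mul_eq_zero, or_iff_right (pow_ne_zero _ X_ne_zero)] at h₁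
  rw [hu₁v, wronskian_X_pow_mul_left hm, wronskian_eq_zero_of_Lop_eq_zero hl0 hv h₁ h₂, mul_zero]

/-- Let `p` be an odd prime, `k` algebraically closed of characteristic
`p`, `λ ∈ k \ {0,1}`, `β ∈ k`.  If `u₁, u₂ ∈ k[t]` satisfy `L(u₁) = L(u₂) = 0`, then
their Wronskian vanishes: `u₁ u₂' - u₁' u₂ = 0` (equivalently, `u₁` and `u₂` are
linearly dependent over `k(t^p)`). -/
theorem stmt9 {k : Type*} [Field k] [IsAlgClosed k] (p : ℕ) (hp : p.Prime) (hodd : Odd p)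
    [CharP k p] (l b : k) (hl0 : l ≠ 0) (hl1 : l ≠ 1)
    (u₁ u₂ : Polynomial k) (h₁ : Lop l b u₁ = 0) (h₂ : Lop l b u₂ = 0) :
    u₁ * derivative u₂ - derivative u₁ * u₂ = 0 :=
  stmt9_general l b hl0 u₁ u₂ h₁ h₂
end

section
/- Let p be an odd prime, k an algebraically closed field of characteristic p, λ ∈ k with λ ≠ 0 and λ ≠ 1, and β ∈ k. Let L be the operator L(u) = t(t-1)(t-λ)·u'' + (3t² - 2(1+λ)t + λ)·u' + (t - β)·u. Suppose u₀, u₁, …, u_{p-1} ∈ k satisfy the recursion λ·(i+1)²·u_{i+1} = ((1+λ)·(i² + i) + β)·u_i - i²·u_{i-1} for 0 ≤ i ≤ p - 2 (with u_{-1} = 0, integers interpreted in k). Then the polynomial u := ∑_{i=0}^{p-1} u_i t^i satisfies L(u) = 0 if and only if β·u_{p-1} - u_{p-2} = 0. -/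
/-!
Writing `θ = X · d/dX`, the operator is `L = X(θ+1)² − (1+λ)θ(θ+1) − β + λ (d/dX) θ`, so the
coefficient of `t^n` in `L(u)` is `n² uₙ₋₁ − ((1+λ)(n²+n) + β) uₙ + λ(n+1)² uₙ₊₁`. For
`n ≤ p − 2` this vanishes by the recursion, and for `n ≥ p` it vanishes because `p = 0` in `k`
and `u` has degree `< p`. The only remaining coefficient, that of `t^{p-1}`, reduces in
characteristic `p` to `u_{p-2} − β u_{p-1}`.
-/

open Polynomial

section Coefficients

variable {k : Type*} [Field k] (l b : k) (u : k[X])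

-- `derivative (X * q)` is `(θ + 1) q`; every summand shifts degrees by a fixed amount.
theorem Lop_eq_euler :
    Lop l b u = X * derivative (X * derivative (X * u))
      - C (1 + l) * (X * derivative (derivative (X * u)))
      - C b * u + C l * derivative (X * derivative u) := by
  simp only [Lop, derivative_mul, derivative_X, map_mul, map_add, map_one, map_ofNat, one_mul]
  ring

theorem coeff_Lop_zero : (Lop l b u).coeff 0 = l * u.coeff 1 - b * u.coeff 0 := by
  simp only [Lop_eq_euler, coeff_add, coeff_sub, coeff_C_mul, coeff_X_mul_zero, coeff_derivative,
    coeff_X_mul]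
  push_cast
  ring

theorem coeff_Lop_succ (n : ℕ) :
    (Lop l b u).coeff (n + 1) =
      l * ((n : k) + 2) ^ 2 * u.coeff (n + 2)
        - ((1 + l) * (((n : k) + 1) ^ 2 + ((n : k) + 1)) + b) * u.coeff (n + 1)
        + ((n : k) + 1) ^ 2 * u.coeff n := by
  simp only [Lop_eq_euler, coeff_add, coeff_sub, coeff_C_mul, coeff_derivative, coeff_X_mul]
  push_cast
  ring

end Coefficients

theorem coeff_sum_range_C_mul_X_pow {R : Type*} [Semiring R] (c : ℕ → R) (p j : ℕ) :
    (∑ i ∈ Finset.range p, C (c i) * X ^ i).coeff j = if j < p then c j else 0 := by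
  simp only [finsetSum_coeff, coeff_C_mul_X_pow, Finset.sum_ite_eq, Finset.mem_range]

theorem Lop_sum_range_eq_C_mul_X_pow {k : Type*} [Field k] {p : ℕ} (hp : 2 ≤ p)
    (hpk : (p : k) = 0) (l b : k) (c : ℕ → k)
    (hrec : ∀ i ≤ p - 2, l * ((i : k) + 1) ^ 2 * c (i + 1)
      = ((1 + l) * ((i : k) ^ 2 + (i : k)) + b) * c i
        - (i : k) ^ 2 * (if i = 0 then 0 else c (i - 1))) :
    Lop l b (∑ i ∈ Finset.range p, C (c i) * X ^ i)
      = C (c (p - 2) - b * c (p - 1)) * X ^ (p - 1) := by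
  ext n
  have hu := coeff_sum_range_C_mul_X_pow c p
  rw [coeff_C_mul_X_pow]
  rcases n with _ | n
  · have h0 := hrec 0 (Nat.zero_le _)
    simp only [Nat.cast_zero, if_true] at h0
    rw [coeff_Lop_zero, hu, hu, if_pos (by omega), if_pos (by omega), if_neg (by omega)]
    linear_combination h0
  rw [coeff_Lop_succ, hu, hu, hu]
  rcases lt_trichotomy (n + 2) p with hlt | rfl | hgt
  · have hn := hrec (n + 1) (by omega)
    simp only [Nat.add_eq_zero_iff, one_ne_zero, and_false, if_false, Nat.add_sub_cancel] at hn
    push_cast at hn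
    simp only [hlt, show n < p by omega, show n + 1 < p by omega, show n + 1 ≠ p - 1 by omega,
      if_true, if_false]
    linear_combination hn
  · have hcast : (n : k) + 2 = 0 := by exact_mod_cast hpk
    simp only [lt_add_iff_pos_right, Nat.ofNat_pos, Nat.lt_add_one, lt_irrefl, Nat.add_sub_cancel,
      Nat.add_succ_sub_one, if_true, if_false]
    linear_combination (n * c n - (1 + l) * (n + 1) * c (n + 1)) * hcast
  · simp only [show ¬ n + 2 < p by omega, show ¬ n + 1 < p by omega,
      show n + 1 ≠ p - 1 by omega, if_false]
    rcases (by omega : n + 1 = p ∨ p ≤ n) with rfl | hge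
    · have hcast : (n : k) + 1 = 0 := by exact_mod_cast hpk
      rw [hcast]
      ring
    · rw [if_neg (by omega)]
      ring

theorem stmt11_general {k : Type*} [Field k] (p : ℕ) (hp : p.Prime)
    [CharP k p] (l b : k)
    (c : ℕ → k)
    (hrec : ∀ i ≤ p - 2, l * ((i : k) + 1) ^ 2 * c (i + 1)
      = ((1 + l) * ((i : k) ^ 2 + (i : k)) + b) * c i
        - (i : k) ^ 2 * (if i = 0 then 0 else c (i - 1)))
    (u : Polynomial k) (hu : u = ∑ i ∈ Finset.range p, Polynomial.C (c i) * X ^ i) :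
    Lop l b u = 0 ↔ b * c (p - 1) - c (p - 2) = 0 := by
  rw [hu, Lop_sum_range_eq_C_mul_X_pow hp.two_le (CharP.cast_eq_zero k p) l b c hrec,
    mul_eq_zero, C_eq_zero, or_iff_left (pow_ne_zero _ X_ne_zero), ← neg_sub, neg_eq_zero]

/-- Let `p` be an odd prime, `k` algebraically closed of characteristic
`p`, `λ ∈ k \ {0,1}`, `β ∈ k`.  Suppose `u₀, …, u_{p-1} ∈ k` satisfy the recursion
`λ (i+1)² u_{i+1} = ((1+λ)(i² + i) + β) uᵢ - i² u_{i-1}` for `0 ≤ i ≤ p - 2` (with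
`u₋₁ = 0`).  Then `u := ∑_{i=0}^{p-1} uᵢ tⁱ` satisfies `L(u) = 0` if and only if
`β u_{p-1} - u_{p-2} = 0`. -/
theorem stmt11 {k : Type*} [Field k] [IsAlgClosed k] (p : ℕ) (hp : p.Prime) (hodd : Odd p)
    [CharP k p] (l b : k) (hl0 : l ≠ 0) (hl1 : l ≠ 1)
    (c : ℕ → k)
    (hrec : ∀ i ≤ p - 2, l * ((i : k) + 1) ^ 2 * c (i + 1)
      = ((1 + l) * ((i : k) ^ 2 + (i : k)) + b) * c i
        - (i : k) ^ 2 * (if i = 0 then 0 else c (i - 1)))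
    (u : Polynomial k) (hu : u = ∑ i ∈ Finset.range p, Polynomial.C (c i) * X ^ i) :
    Lop l b u = 0 ↔ b * c (p - 1) - c (p - 2) = 0 :=
  stmt11_general p hp l b c hrec u hu
end

section
/- Let p ≥ 11 be a prime and consider the polynomials F = 40βλ² + (80β + 14β² + 360)λ + 132β + 14β² + 360 + β³ and G = -4βλ³ + (3β² - 12β - 24)λ² + (12 - 8β)λ + 12 in 𝔽_p[λ, β]. Then there exist λ, β in an algebraic closure of 𝔽_p with F(λ, β) = 0, G(λ, β) = 0, λ ≠ 0 and λ ≠ 1. -/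
/-!
Eliminating `β` from `F` and `G` leaves a degree-ten polynomial `u(λ)`; over an algebraically
closed field `u` has a root `λ`, and the first subresultant of `F` and `G`, which is linear in
`β`, then determines the common root `β`. Away from the characteristics `2, 3, 5, 7, 601, 266647`
the root satisfies `λ ∉ {0, 1}` and the leading coefficient of the subresultant does not vanish
at it. For `p = 601` and `p = 266647` explicit solutions in `𝔽_p` are used instead.
-/

open Polynomial

namespace SpecialDeformationData

section CommRing

variable {R S : Type*} [CommRing R] [CommRing S]

def F (l b : R) : R :=
  40 * b * l ^ 2 + (80 * b + 14 * b ^ 2 + 360) * l + 132 * b + 14 * b ^ 2 + 360 + b ^ 3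

def G (l b : R) : R :=
  -4 * b * l ^ 3 + (3 * b ^ 2 - 12 * b - 24) * l ^ 2 + (12 - 8 * b) * l + 12

/-- `Res_β(F, G) = 192 · resultantFactor λ`. -/
def resultantFactor (l : R) : R :=
  9 + 111 * l + 726 * l ^ 2 + 4997 * l ^ 3 + 25077 * l ^ 4 + 69623 * l ^ 5 + 135382 * l ^ 6
    + 170084 * l ^ 7 + 86971 * l ^ 8 + 15960 * l ^ 9 + 1360 * l ^ 10

def betaNum (l : R) : R :=
  96 * l + 744 * l ^ 2 + 1008 * l ^ 3 - 3984 * l ^ 4 - 4344 * l ^ 5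

def betaDen (l : R) : R :=
  4 * l ^ 2 * (7 + 123 * l + 577 * l ^ 2 + 372 * l ^ 3 + 136 * l ^ 4)

theorem subresultant_eq (l b : R) :
    9 * l ^ 4 * F l b - (8 * l + 54 * l ^ 2 + 46 * l ^ 3 + 3 * l ^ 2 * b) * G l b =
      b * betaDen l - betaNum l := by
  unfold F G betaDen betaNum
  ring

theorem betaDen_sq_mul_G (l b : R) :
    betaDen l ^ 2 * G l b =
      (64 * l ^ 3 - 2040 * l ^ 4 - 21456 * l ^ 5 - 53520 * l ^ 6 - 44472 * l ^ 7 - 12480 * l ^ 8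
          - 2176 * l ^ 9
          + (84 * l ^ 4 + 1476 * l ^ 5 + 6924 * l ^ 6 + 4464 * l ^ 7 + 1632 * l ^ 8) * b)
        * (b * betaDen l - betaNum l) + 1728 * l ^ 4 * resultantFactor l := by
  unfold G betaDen betaNum resultantFactor
  ring

theorem map_F (φ : R →+* S) (l b : R) : φ (F l b) = F (φ l) (φ b) := by
  simp [F, map_ofNat]

theorem map_G (φ : R →+* S) (l b : R) : φ (G l b) = G (φ l) (φ b) := by
  simp [G, map_ofNat]

theorem exists_solution_of_injective (φ : R →+* S) (hφ : Function.Injective φ) {l b : R}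
    (hF : F l b = 0) (hG : G l b = 0) (h0 : l ≠ 0) (h1 : l ≠ 1) :
    ∃ l b : S, F l b = 0 ∧ G l b = 0 ∧ l ≠ 0 ∧ l ≠ 1 :=
  ⟨φ l, φ b, by rw [← map_F, hF, map_zero], by rw [← map_G, hG, map_zero],
    (map_ne_zero_iff φ hφ).mpr h0, fun h ↦ h1 (hφ (h.trans (map_one φ).symm))⟩

end CommRing

section Field

variable {K : Type*} [Field K] {l : K}

theorem ne_zero_of_resultantFactor_eq_zero (h3 : (3 : K) ≠ 0) (hu : resultantFactor l = 0) :
    l ≠ 0 := by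
  rintro rfl
  have h9 : (3 : K) ^ 2 = 0 := by norm_num [resultantFactor] at hu ⊢; exact hu
  exact h3 (pow_eq_zero_iff two_ne_zero |>.mp h9)

theorem ne_one_of_resultantFactor_eq_zero (h2 : (2 : K) ≠ 0) (h3 : (3 : K) ≠ 0)
    (h5 : (5 : K) ≠ 0) (h7 : (7 : K) ≠ 0) (hu : resultantFactor l = 0) : l ≠ 1 := by
  rintro rfl
  have h : (2 : K) ^ 2 * 3 ^ 6 * 5 ^ 2 * 7 = 0 := by norm_num [resultantFactor] at hu ⊢; exact hu
  simp [h2, h3, h5, h7] at h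

theorem betaDen_ne_zero (h2 : (2 : K) ≠ 0) (h3 : (3 : K) ≠ 0) (h5 : (5 : K) ≠ 0)
    (h601 : (601 : K) ≠ 0) (h266647 : (266647 : K) ≠ 0) (hu : resultantFactor l = 0) :
    betaDen l ≠ 0 := by
  have hl := ne_zero_of_resultantFactor_eq_zero h3 hu
  suffices hq : 7 + 123 * l + 577 * l ^ 2 + 372 * l ^ 3 + 136 * l ^ 4 ≠ 0 by
    simp only [betaDen, ne_eq, mul_eq_zero, pow_eq_zero_iff two_ne_zero, not_or]
    exact ⟨⟨by rw [show (4 : K) = 2 ^ 2 by norm_num]; exact pow_ne_zero 2 h2, hl⟩, hq⟩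
  intro hq
  -- a Bézout relation between `resultantFactor` and the quartic factor of `betaDen` in `ℤ[λ]`
  have h : (2 : K) ^ 2 * 3 ^ 9 * 5 ^ 4 * 601 ^ 2 * 266647 ^ 2 = 0 := by
    unfold resultantFactor at hu
    linear_combination ((-2372046302085781069736681) + (-30783692627085213298279553) * l
        + (-20692648589461656644049988) * l ^ 2 + (-8028715718512341353943688) * l ^ 3) * hu
      + ((3230306405350286828713947) + (20431812188171905499067441) * l
        + (135475662741947252283009717) * l ^ 2 + (988126074436908516520927909) * l ^ 3
        + (3067863876097582199632684582) * l ^ 4 + (6524282515002786541137972227) * l ^ 5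
        + (9251807098683526207628961754) * l ^ 6 + (4987368996404220655591020443) * l ^ 7
        + (929510900560727288295431800) * l ^ 8 + (80287157185123413539436880) * l ^ 9) * hq
  simp [h2, h3, h5, h601, h266647] at h

theorem G_eq_zero_of_mul_betaDen {b : K} (hl : betaDen l ≠ 0) (hb : b * betaDen l = betaNum l)
    (hu : resultantFactor l = 0) : G l b = 0 := by
  have h := betaDen_sq_mul_G l b
  rw [hb, sub_self, mul_zero, zero_add, hu, mul_zero] at h
  exact (mul_eq_zero.mp h).resolve_left (pow_ne_zero 2 hl)

theorem F_eq_zero_of_mul_betaDen {b : K} (h3 : (3 : K) ≠ 0) (hl : l ≠ 0)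
    (hb : b * betaDen l = betaNum l) (hG : G l b = 0) : F l b = 0 := by
  have h := subresultant_eq l b
  rw [hb, sub_self, hG, mul_zero, sub_zero] at h
  have h9 : (9 : K) * l ^ 4 ≠ 0 := mul_ne_zero
    (by rw [show (9 : K) = 3 ^ 2 by norm_num]; exact pow_ne_zero 2 h3) (pow_ne_zero 4 hl)
  exact (mul_eq_zero.mp h).resolve_left h9

theorem exists_resultantFactor_eq_zero [IsAlgClosed K] (h2 : (2 : K) ≠ 0) (h3 : (3 : K) ≠ 0)
    (h5 : (5 : K) ≠ 0) : ∃ l : K, resultantFactor l = 0 := by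
  let P : K[X] := C 9 + C 111 * X + C 726 * X ^ 2 + C 4997 * X ^ 3 + C 25077 * X ^ 4
    + C 69623 * X ^ 5 + C 135382 * X ^ 6 + C 170084 * X ^ 7 + C 86971 * X ^ 8 + C 15960 * X ^ 9
    + C 1360 * X ^ 10
  have hdeg : P.degree ≠ 0 := by
    intro hP
    have h1 : P.coeff 1 = 0 := coeff_eq_zero_of_degree_lt (by rw [hP]; norm_num)
    have h10 : P.coeff 10 = 0 := coeff_eq_zero_of_degree_lt (by rw [hP]; norm_num)
    simp [P, coeff_C, coeff_X_pow] at h1 h10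
    have h : (2 : K) ^ 4 * 3 ^ 2 * 5 = 0 := by linear_combination 80 * h1 - 6 * h10
    simp [h2, h3, h5] at h
  obtain ⟨l, hl⟩ := IsAlgClosed.exists_root P hdeg
  simp only [P, IsRoot, eval_add, eval_mul, eval_pow, eval_C, eval_X] at hl
  exact ⟨l, by unfold resultantFactor; linear_combination hl⟩

theorem exists_solution [IsAlgClosed K] (h2 : (2 : K) ≠ 0) (h3 : (3 : K) ≠ 0)
    (h5 : (5 : K) ≠ 0) (h7 : (7 : K) ≠ 0) (h601 : (601 : K) ≠ 0)
    (h266647 : (266647 : K) ≠ 0) :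
    ∃ l b : K, F l b = 0 ∧ G l b = 0 ∧ l ≠ 0 ∧ l ≠ 1 := by
  obtain ⟨l, hu⟩ := exists_resultantFactor_eq_zero h2 h3 h5
  have hl := ne_zero_of_resultantFactor_eq_zero h3 hu
  have hden := betaDen_ne_zero h2 h3 h5 h601 h266647 hu
  have hb : betaNum l / betaDen l * betaDen l = betaNum l := div_mul_cancel₀ _ hden
  have hG := G_eq_zero_of_mul_betaDen hden hb hu
  exact ⟨l, _, F_eq_zero_of_mul_betaDen h3 hl hb hG, hG, hl,
    ne_one_of_resultantFactor_eq_zero h2 h3 h5 h7 hu⟩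

theorem exists_solution_of_charP [IsAlgClosed K] (p : ℕ) [CharP K p] (hp : 11 ≤ p)
    (h601 : p ≠ 601) (h266647 : p ≠ 266647) :
    ∃ l b : K, F l b = 0 ∧ G l b = 0 ∧ l ≠ 0 ∧ l ≠ 1 := by
  have ne_zero (q : ℕ) [q.AtLeastTwo] (hq : q.Prime) (hpq : p ≠ q) :
      (OfNat.ofNat q : K) ≠ 0 := by
    rw [← Nat.cast_ofNat]
    exact CharP.cast_ne_zero_of_ne_of_prime K hq hpq
  exact exists_solution (ne_zero 2 Nat.prime_two (by omega)) (ne_zero 3 Nat.prime_three (by omega))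
    (ne_zero 5 Nat.prime_five (by omega)) (ne_zero 7 (by norm_num) (by omega))
    (ne_zero 601 (by norm_num) h601) (ne_zero 266647 (by norm_num) h266647)

end Field

theorem exists_solution_algebraicClosure_of_zmod (p : ℕ) [Fact p.Prime] {l b : ZMod p}
    (h : F l b = 0 ∧ G l b = 0 ∧ l ≠ 0 ∧ l ≠ 1) :
    ∃ l b : AlgebraicClosure (ZMod p), F l b = 0 ∧ G l b = 0 ∧ l ≠ 0 ∧ l ≠ 1 :=
  exists_solution_of_injective _ (algebraMap (ZMod p) _).injective h.1 h.2.1 h.2.2.1 h.2.2.2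

/-- In characteristics `601` and `266647`, `resultantFactor` and `betaDen` have a common root, so
solutions over the prime field are exhibited directly. -/
theorem solution_zmod601 :
    F (109 : ZMod 601) 496 = 0 ∧ G (109 : ZMod 601) 496 = 0 ∧ (109 : ZMod 601) ≠ 0 ∧
      (109 : ZMod 601) ≠ 1 := by
  decide

theorem solution_zmod266647 :
    F (126078 : ZMod 266647) 213237 = 0 ∧ G (126078 : ZMod 266647) 213237 = 0 ∧
      (126078 : ZMod 266647) ≠ 0 ∧ (126078 : ZMod 266647) ≠ 1 := by
  decide

end SpecialDeformationData

open SpecialDeformationData in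
theorem stmt13_general (p : ℕ) (hge : 11 ≤ p) [Fact p.Prime] :
    ∃ l b : AlgebraicClosure (ZMod p),
      40 * b * l ^ 2 + (80 * b + 14 * b ^ 2 + 360) * l
          + 132 * b + 14 * b ^ 2 + 360 + b ^ 3 = 0 ∧
        -4 * b * l ^ 3 + (3 * b ^ 2 - 12 * b - 24) * l ^ 2 + (12 - 8 * b) * l + 12 = 0 ∧
        l ≠ 0 ∧ l ≠ 1 := by
  obtain rfl | h601 := eq_or_ne p 601
  · exact exists_solution_algebraicClosure_of_zmod 601 solution_zmod601
  obtain rfl | h266647 := eq_or_ne p 266647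
  · exact exists_solution_algebraicClosure_of_zmod 266647 solution_zmod266647
  exact exists_solution_of_charP p hge h601 h266647

/-- Let `p ≥ 11` be a prime and consider
`F = 40βλ² + (80β + 14β² + 360)λ + 132β + 14β² + 360 + β³` and
`G = -4βλ³ + (3β² - 12β - 24)λ² + (12 - 8β)λ + 12` over `𝔽_p`.  Then there exist
`λ, β` in an algebraic closure of `𝔽_p` with `F(λ,β) = 0`, `G(λ,β) = 0`, `λ ≠ 0`
and `λ ≠ 1`. -/
theorem stmt13 (p : ℕ) (hp : p.Prime) (hge : 11 ≤ p) [Fact p.Prime] :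
    ∃ l b : AlgebraicClosure (ZMod p),
      40 * b * l ^ 2 + (80 * b + 14 * b ^ 2 + 360) * l
          + 132 * b + 14 * b ^ 2 + 360 + b ^ 3 = 0 ∧
        -4 * b * l ^ 3 + (3 * b ^ 2 - 12 * b - 24) * l ^ 2 + (12 - 8 * b) * l + 12 = 0 ∧
        l ≠ 0 ∧ l ≠ 1 :=
  stmt13_general p hge
end

section
/- Let k be a field, a ∈ k, and let p₁, p₂, Q, u be rational functions in k(t) such that p₁, p₂ are regular at a, Q is regular and nonvanishing at a, Q' = p₁·Q, u is a polynomial with u(a) = 0 and u'(a) ≠ 0 (a simple zero), and u'' + p₁·u' + p₂·u = 0. Then the rational function 1/(Q·u²) has vanishing residue at a; that is, there exist c ∈ k and a rational function h ∈ k(t) regular at a such that 1/(Q·u²) = c/(t-a)² + h. -/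
/-!
Write `Q = N / D` and `u = (t - a) V` with `V(a) ≠ 0`, so that `1/(Q u²) = f / (t - a)²` with
`f = D / (N V²)` regular at `a`; the residue at `a` is `f'(a)`. Since `Q'/Q = p₁`, multiplying the
equation by `N D` (and by the denominator of `p₂`) and evaluating at the zero `a` of `u` gives
`2 N D V' + (N' D - N D') V = 0` at `a`, and the numerator of `f'` is `-V` times this.
-/

/-- The derivative `d/dt` on the field `k(t)` of rational functions, computed by the
quotient rule from the (coprime) numerator and denominator. -/
noncomputable def ratDeriv {k : Type*} [Field k] (f : RatFunc k) : RatFunc k :=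
  (algebraMap (Polynomial k) (RatFunc k) (Polynomial.derivative f.num)
      * algebraMap (Polynomial k) (RatFunc k) f.denom
    - algebraMap (Polynomial k) (RatFunc k) f.num
      * algebraMap (Polynomial k) (RatFunc k) (Polynomial.derivative f.denom))
  / (algebraMap (Polynomial k) (RatFunc k) f.denom) ^ 2

/-- A rational function is regular at a point `a` if its (reduced) denominator does not
vanish at `a`. -/
def RatFunc.IsRegularAt {k : Type*} [Field k] (f : RatFunc k) (a : k) : Prop :=
  f.denom.eval a ≠ 0

open Polynomial

section

variable {k : Type*} [Field k]

lemma Polynomial.sq_X_sub_C_dvd_of_isRoot_derivative {R : Type*} [CommRing R] [IsDomain R]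
    {p : R[X]} {a : R} (h0 : p.IsRoot a) (h1 : (derivative p).IsRoot a) :
    (X - C a) ^ 2 ∣ p := by
  rcases eq_or_ne p 0 with rfl | hp
  · exact dvd_zero _
  exact (le_rootMultiplicity_iff hp).mp ((one_lt_rootMultiplicity_iff_isRoot hp).mpr ⟨h0, h1⟩)

lemma Polynomial.eval_derivative_X_sub_C_mul {R : Type*} [CommRing R] (a : R) (V : R[X]) :
    (derivative ((X - C a) * V)).eval a = V.eval a := by
  simp [derivative_mul]

lemma Polynomial.eval_derivative_derivative_X_sub_C_mul {R : Type*} [CommRing R] (a : R)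
    (V : R[X]) :
    (derivative (derivative ((X - C a) * V))).eval a = 2 * (derivative V).eval a := by
  simp [derivative_mul]
  ring

lemma RatFunc.isRegularAt_algebraMap_div {P R : k[X]} {a : k} (hR : R.eval a ≠ 0) :
    (algebraMap k[X] (RatFunc k) P / algebraMap k[X] (RatFunc k) R).IsRegularAt a := by
  obtain ⟨g, hg⟩ := RatFunc.denom_div_dvd P R
  intro h
  exact hR (by rw [hg, Polynomial.eval_mul, h, zero_mul])

lemma RatFunc.mul_algebraMap_denom (f : RatFunc k) :
    f * algebraMap k[X] (RatFunc k) f.denom = algebraMap k[X] (RatFunc k) f.num :=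
  ((div_eq_iff (RatFunc.algebraMap_ne_zero f.denom_ne_zero)).mp (RatFunc.num_div_denom f)).symm

lemma ratDeriv_algebraMap (P : k[X]) :
    ratDeriv (algebraMap k[X] (RatFunc k) P) = algebraMap k[X] (RatFunc k) (derivative P) := by
  simp [ratDeriv, RatFunc.num_algebraMap, RatFunc.denom_algebraMap]

lemma ratDeriv_mul_algebraMap_denom_sq (f : RatFunc k) :
    ratDeriv f * algebraMap k[X] (RatFunc k) f.denom ^ 2
      = algebraMap k[X] (RatFunc k)
          (derivative f.num * f.denom - f.num * derivative f.denom) := by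
  rw [ratDeriv, div_mul_cancel₀ _ (pow_ne_zero _ (RatFunc.algebraMap_ne_zero f.denom_ne_zero))]
  simp only [map_sub, map_mul]

lemma mul_algebraMap_num_mul_denom_of_ratDeriv_eq {p Q : RatFunc k} (hQ' : ratDeriv Q = p * Q) :
    p * algebraMap k[X] (RatFunc k) (Q.num * Q.denom)
      = algebraMap k[X] (RatFunc k)
          (derivative Q.num * Q.denom - Q.num * derivative Q.denom) := by
  rw [← ratDeriv_mul_algebraMap_denom_sq, hQ', map_mul, ← RatFunc.mul_algebraMap_denom Q]
  ring

lemma ode_mul_denoms {p₁ p₂ Q : RatFunc k} {U : k[X]} (hQ' : ratDeriv Q = p₁ * Q)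
    (hode : algebraMap k[X] (RatFunc k) (derivative (derivative U))
      + p₁ * algebraMap k[X] (RatFunc k) (derivative U) + p₂ * algebraMap k[X] (RatFunc k) U = 0) :
    Q.num * Q.denom * p₂.denom * derivative (derivative U)
      + (derivative Q.num * Q.denom - Q.num * derivative Q.denom) * p₂.denom * derivative U
      + p₂.num * Q.num * Q.denom * U = 0 := by
  apply RatFunc.algebraMap_injective k
  have hp₁ := mul_algebraMap_num_mul_denom_of_ratDeriv_eq hQ'
  have hp₂ := RatFunc.mul_algebraMap_denom p₂
  simp only [map_add, map_mul, map_sub, map_zero] at hp₁ hp₂ ⊢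
  linear_combination
    (algebraMap k[X] (RatFunc k) Q.num * algebraMap k[X] (RatFunc k) Q.denom
      * algebraMap k[X] (RatFunc k) p₂.denom) * hode
    - (algebraMap k[X] (RatFunc k) p₂.denom
      * algebraMap k[X] (RatFunc k) (derivative U)) * hp₁
    - (algebraMap k[X] (RatFunc k) Q.num * algebraMap k[X] (RatFunc k) Q.denom
      * algebraMap k[X] (RatFunc k) U) * hp₂

lemma eval_wronskian_eq_zero_of_ode {p₁ p₂ Q : RatFunc k} {a : k} {V : k[X]}
    (hp₂ : p₂.IsRegularAt a) (hQ' : ratDeriv Q = p₁ * Q)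
    (hode : algebraMap k[X] (RatFunc k) (derivative (derivative ((X - C a) * V)))
      + p₁ * algebraMap k[X] (RatFunc k) (derivative ((X - C a) * V))
      + p₂ * algebraMap k[X] (RatFunc k) ((X - C a) * V) = 0) :
    (derivative Q.denom * (Q.num * V ^ 2) - Q.denom * derivative (Q.num * V ^ 2)).eval a = 0 := by
  have h := congrArg (eval a) (ode_mul_denoms hQ' hode)
  simp only [eval_add, eval_mul, eval_sub, eval_zero, eval_derivative_X_sub_C_mul,
    eval_derivative_derivative_X_sub_C_mul, eval_X, eval_C, sub_self, zero_mul, mul_zero,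
    add_zero] at h
  have hV : 2 * Q.num.eval a * Q.denom.eval a * (derivative V).eval a
      + ((derivative Q.num).eval a * Q.denom.eval a - Q.num.eval a * (derivative Q.denom).eval a)
        * V.eval a = 0 :=
    (mul_eq_zero.mp (by linear_combination h)).resolve_left hp₂
  simp only [derivative_mul, derivative_pow, eval_sub, eval_mul, eval_add, eval_pow,
    eval_C, Nat.cast_ofNat]
  linear_combination -(V.eval a) * hV

lemma exists_div_mul_X_sub_C_sq_eq_add_isRegularAt {P R : k[X]} {a : k} (hR : R.eval a ≠ 0)
    (hPR : (derivative P * R - P * derivative R).eval a = 0) :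
    ∃ (c : k) (h : RatFunc k), h.IsRegularAt a ∧
      algebraMap k[X] (RatFunc k) P
          / (algebraMap k[X] (RatFunc k) R * (RatFunc.X - RatFunc.C a) ^ 2)
        = RatFunc.C c / (RatFunc.X - RatFunc.C a) ^ 2 + h := by
  set c := P.eval a / R.eval a
  obtain ⟨W, hW⟩ : (X - C a) ^ 2 ∣ P - C c * R := by
    apply sq_X_sub_C_dvd_of_isRoot_derivative
    · simp [c, hR]
    · simp only [IsRoot, derivative_sub, derivative_C_mul, eval_sub, eval_mul, eval_C, c]
      simp only [eval_sub, eval_mul] at hPR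
      field_simp
      linear_combination hPR
  refine ⟨c, algebraMap k[X] (RatFunc k) W / algebraMap k[X] (RatFunc k) R,
    RatFunc.isRegularAt_algebraMap_div hR, ?_⟩
  have hX : RatFunc.X - RatFunc.C a = algebraMap k[X] (RatFunc k) (X - C a) := by
    simp [RatFunc.algebraMap_X, RatFunc.algebraMap_C]
  have hP : P = C c * R + (X - C a) ^ 2 * W := by linear_combination hW
  have hR' : algebraMap k[X] (RatFunc k) R ≠ 0 :=
    RatFunc.algebraMap_ne_zero (by rintro rfl; simp at hR)
  have hs : algebraMap k[X] (RatFunc k) (X - C a) ≠ 0 :=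
    RatFunc.algebraMap_ne_zero (X_sub_C_ne_zero a)
  rw [hX, hP, ← RatFunc.algebraMap_C]
  field_simp
  simp only [map_add, map_mul, map_pow]
  ring

end

theorem stmt15_general {k : Type*} [Field k] (a : k) (p₁ p₂ Q u : RatFunc k) (U : Polynomial k)
    (hp₂ : p₂.IsRegularAt a)
    (hQne : Q.num.eval a ≠ 0)
    (hQ' : ratDeriv Q = p₁ * Q)
    (hu : u = algebraMap (Polynomial k) (RatFunc k) U)
    (hU0 : U.eval a = 0) (hU1 : (Polynomial.derivative U).eval a ≠ 0)
    (hode : ratDeriv (ratDeriv u) + p₁ * ratDeriv u + p₂ * u = 0) :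
    ∃ (c : k) (h : RatFunc k), h.IsRegularAt a ∧
      1 / (Q * u ^ 2)
        = RatFunc.C c / (RatFunc.X - RatFunc.C a) ^ 2 + h := by
  obtain ⟨V, rfl⟩ := dvd_iff_isRoot.mpr hU0
  rw [eval_derivative_X_sub_C_mul] at hU1
  rw [hu, ratDeriv_algebraMap, ratDeriv_algebraMap] at hode
  obtain ⟨c, h, hh, heq⟩ := exists_div_mul_X_sub_C_sq_eq_add_isRegularAt
    (P := Q.denom) (R := Q.num * V ^ 2) (by simp [hQne, hU1])
    (eval_wronskian_eq_zero_of_ode hp₂ hQ' hode)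
  refine ⟨c, h, hh, ?_⟩
  rw [← heq, hu]
  nth_rewrite 1 [← RatFunc.num_div_denom Q]
  simp only [map_mul, map_pow, map_sub, RatFunc.algebraMap_X, RatFunc.algebraMap_C]
  generalize RatFunc.X - RatFunc.C a = s
  rw [one_div, mul_inv, inv_div]
  ring

/-- Let `k` be a field, `a ∈ k`, and `p₁, p₂, Q, u ∈ k(t)` such that
`p₁, p₂` are regular at `a`, `Q` is regular and nonvanishing at `a`, `Q' = p₁ Q`,
`u` is a polynomial with a simple zero at `a`, and `u'' + p₁ u' + p₂ u = 0`.  Then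
`1/(Q u²)` has vanishing residue at `a`: there are `c ∈ k` and `h ∈ k(t)` regular at `a`
with `1/(Q u²) = c/(t-a)² + h`. -/
theorem stmt15 {k : Type*} [Field k] (a : k) (p₁ p₂ Q u : RatFunc k) (U : Polynomial k)
    (hp₁ : p₁.IsRegularAt a) (hp₂ : p₂.IsRegularAt a)
    (hQreg : Q.IsRegularAt a) (hQne : Q.num.eval a ≠ 0)
    (hQ' : ratDeriv Q = p₁ * Q)
    (hu : u = algebraMap (Polynomial k) (RatFunc k) U)
    (hU0 : U.eval a = 0) (hU1 : (Polynomial.derivative U).eval a ≠ 0)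
    (hode : ratDeriv (ratDeriv u) + p₁ * ratDeriv u + p₂ * u = 0) :
    ∃ (c : k) (h : RatFunc k), h.IsRegularAt a ∧
      1 / (Q * u ^ 2)
        = RatFunc.C c / (RatFunc.X - RatFunc.C a) ^ 2 + h :=
  stmt15_general a p₁ p₂ Q u U hp₂ hQne hQ' hu hU0 hU1 hode
end
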